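/- Let E be a finite directed edge relation on natural-number vertices, and let A = { j | ∃ i k, (j, i) ∈ E ∧ (k, j) ∈ E ∧ i < j ∧ i ≤ k } be the set of aborted vertices. Then in the induced subgraph on V \ A, for every edge (i, j) (meaning T_j ← T_i) between surviving vertices, sorting by min_out computed on the original graph still yields: ¬(min_out(j) < min_out(i)) whenever both i, j ∉ A. -/
import Mathlib


/-- `min_out(v)` computed on the original graph `E`. -/
def minOut (E : Finset (ℕ × ℕ)) (v : ℕ) : ℕ :=
  (insert (v + 1) ((E.filter (fun p => p.1 = v ∧ p.2 < v)).image Prod.snd)).min'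
    (Finset.insert_nonempty _ _)

/-- The set of aborted vertices. -/
def Aborted (E : Finset (ℕ × ℕ)) (j : ℕ) : Prop :=
  ∃ i k : ℕ, (j, i) ∈ E ∧ (k, j) ∈ E ∧ i < j ∧ i ≤ k

lemma minOut_le_succ (E : Finset (ℕ × ℕ)) (v : ℕ) : minOut E v ≤ v + 1 :=
  Finset.min'_le _ _ (Finset.mem_insert_self _ _)

lemma minOut_le_of_edge (E : Finset (ℕ × ℕ)) {v u : ℕ} (h : (v, u) ∈ E) (hu : u < v) :
    minOut E v ≤ u := by
  apply Finset.min'_le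
  apply Finset.mem_insert_of_mem
  exact Finset.mem_image.2 ⟨(v, u), Finset.mem_filter.2 ⟨h, rfl, hu⟩, rfl⟩

lemma minOut_cases (E : Finset (ℕ × ℕ)) (v : ℕ) :
    minOut E v = v + 1 ∨ ((v, minOut E v) ∈ E ∧ minOut E v < v) := by
  have h := Finset.min'_mem (insert (v + 1)
    ((E.filter (fun p => p.1 = v ∧ p.2 < v)).image Prod.snd)) (Finset.insert_nonempty _ _)
  rcases Finset.mem_insert.1 h with h | h
  · exact Or.inl h
  · right
    obtain ⟨p, hp, hp2⟩ := Finset.mem_image.1 h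
    obtain ⟨hpE, hp1, hplt⟩ := Finset.mem_filter.1 hp
    have hp2' : p.2 = minOut E v := hp2
    have : p = (v, minOut E v) := Prod.ext hp1 hp2'
    rw [this] at hpE
    exact ⟨hpE, hp2' ▸ hplt⟩

/-- On the induced subgraph of surviving vertices, for every edge `(i, j)`
(meaning `T_j ← T_i`) between survivors, sorting by `min_out` (computed on the
original graph) still does not reverse the topological direction:
`¬ (min_out(j) < min_out(i))`. -/
theorem minOut_topological_after_aborts (E : Finset (ℕ × ℕ)) :
    ∀ i j : ℕ, (i, j) ∈ E → ¬ Aborted E i → ¬ Aborted E j →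
      ¬ (minOut E j < minOut E i) := by
  intro i j hij _ hj hlt
  apply hj
  rcases minOut_cases E j with h | ⟨hE, hlt'⟩
  · exfalso
    have hi1 : minOut E i ≤ i + 1 := minOut_le_succ E i
    rcases le_or_gt i j with h' | h'
    · omega
    · have := minOut_le_of_edge E hij h'
      omega
  · refine ⟨minOut E j, i, hE, hij, hlt', ?_⟩
    rcases le_or_gt i j with h' | h'
    · have := minOut_le_succ E i; omega
    · omega
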